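/- Let s(n) be the number of {Empty, Blue, Red}-colorings of Fin n with no adjacent pair colored Blue-Red or Red-Blue. Then 2·s(n) = (1+√2)^(n+1) + (1-√2)^(n+1) for all n ≥ 0, as an identity of real numbers. -/

import Mathlib

inductive Color : Type
  | Empty | Blue | Red
  deriving DecidableEq

instance : Fintype Color where
  elems := {Color.Empty, Color.Blue, Color.Red}
  complete := fun x => by cases x <;> simp

/-- Number of Snort positions on the path `P_n`. -/
def snortPath (n : ℕ) : ℕ :=
  Fintype.card {c : Fin n → Color //
    ∀ i j : Fin n, (j : ℕ) = (i : ℕ) + 1 →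
      ¬((c i = Color.Blue ∧ c j = Color.Red) ∨ (c i = Color.Red ∧ c j = Color.Blue))}

/-!
Sort the colourings of a path by their first colour. A colouring starting with Empty may be
followed by any colouring, one starting with Blue (resp. Red) only by one starting with Empty or
Blue (resp. Red); the Blue/Red symmetry then gives `s (n + 2) = 2 * s (n + 1) + s n`. With
`s 0 = 1`, `s 1 = 3`, this is solved by the closed form because `1 ± √2` are the roots of
`x ^ 2 = 2 * x + 1`.
-/

open Finset

section Chains

variable {α : Type*} {r : α → α → Prop}

lemma List.isChain_ofFn_iff_forall_adjacent {n : ℕ} (c : Fin n → α) :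
    (List.ofFn c).IsChain r ↔ ∀ i j : Fin n, (j : ℕ) = i + 1 → r (c i) (c j) := by
  rw [List.isChain_ofFn]
  constructor
  · rintro h i ⟨j, hj⟩ rfl
    exact h i hj
  · exact fun h i _ => h _ _ rfl

lemma List.isChain_ofFn_cons {n : ℕ} (a : α) (c : Fin (n + 1) → α) :
    (List.ofFn (Fin.cons a c : Fin (n + 2) → α)).IsChain r ↔
      r a (c 0) ∧ (List.ofFn c).IsChain r := by
  simp [List.ofFn_succ, List.isChain_cons]

variable (r) [Fintype α] [DecidableEq α] [DecidableRel r]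

def chainsFrom (n : ℕ) (a : α) : Finset (Fin (n + 1) → α) :=
  {c | (List.ofFn c).IsChain r ∧ c 0 = a}

lemma card_chainsFrom_succ (n : ℕ) (a : α) :
    #(chainsFrom r (n + 1) a) = ∑ b with r a b, #(chainsFrom r n b) := by
  have hcons : chainsFrom r (n + 1) a =
      (({b | r a b} : Finset α).biUnion (chainsFrom r n)).map
        ⟨Fin.cons a, Fin.cons_right_injective (α := fun _ => α) a⟩ := by
    ext c
    induction c using Fin.consCases with
    | cons b c =>
      simp only [chainsFrom, mem_map, mem_biUnion, mem_filter, mem_univ, true_and,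
        Function.Embedding.coeFn_mk, Fin.cons_inj, List.isChain_ofFn_cons, Fin.cons_zero]
      constructor
      · rintro ⟨⟨hr, hc⟩, rfl⟩
        exact ⟨c, ⟨_, hr, hc, rfl⟩, rfl, rfl⟩
      · rintro ⟨c, ⟨_, hr, hc, rfl⟩, rfl, rfl⟩
        exact ⟨⟨hr, hc⟩, rfl⟩
  rw [hcons, card_map, card_biUnion]
  intro b _ b' _ hne
  exact disjoint_filter.2 fun c _ hb hb' => hne (hb.2.symm.trans hb'.2)

lemma card_isChain_ofFn_succ (n : ℕ) :
    Fintype.card {c : Fin (n + 1) → α // (List.ofFn c).IsChain r} =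
      ∑ a, #(chainsFrom r n a) := by
  rw [Fintype.card_subtype, card_eq_sum_card_fiberwise (f := (· 0)) (t := univ) (by simp)]
  simp [chainsFrom, filter_filter]

end Chains

namespace Color

def Compatible (a b : Color) : Prop :=
  ¬((a = Blue ∧ b = Red) ∨ (a = Red ∧ b = Blue))

instance : DecidableRel Compatible := fun a b => by unfold Compatible; infer_instance

lemma sum_univ {M : Type*} [AddCommMonoid M] (f : Color → M) :
    ∑ a, f a = f Empty + f Blue + f Red := by
  show ∑ a ∈ {Empty, Blue, Red}, f a = _
  simp [add_assoc]

lemma card_chainsFrom_empty_succ (n : ℕ) :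
    #(chainsFrom Compatible (n + 1) Empty) = ∑ b, #(chainsFrom Compatible n b) := by
  simp [card_chainsFrom_succ, Compatible]

lemma card_chainsFrom_blue_succ (n : ℕ) :
    #(chainsFrom Compatible (n + 1) Blue) =
      #(chainsFrom Compatible n Empty) + #(chainsFrom Compatible n Blue) := by
  simp [card_chainsFrom_succ, sum_filter, sum_univ, Compatible]

lemma card_chainsFrom_red_succ (n : ℕ) :
    #(chainsFrom Compatible (n + 1) Red) =
      #(chainsFrom Compatible n Empty) + #(chainsFrom Compatible n Red) := by
  simp [card_chainsFrom_succ, sum_filter, sum_univ, Compatible]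

lemma card_chainsFrom_blue_eq_red (n : ℕ) :
    #(chainsFrom Compatible n Blue) = #(chainsFrom Compatible n Red) := by
  induction n with
  | zero => decide
  | succ n ih => rw [card_chainsFrom_blue_succ, card_chainsFrom_red_succ, ih]

end Color

open Color

lemma snortPath_eq_card_isChain (n : ℕ) :
    snortPath n = Fintype.card {c : Fin n → Color // (List.ofFn c).IsChain Compatible} :=
  Fintype.card_congr <| Equiv.subtypeEquivRight fun c =>
    (List.isChain_ofFn_iff_forall_adjacent (r := Compatible) c).symm

lemma snortPath_succ (n : ℕ) : snortPath (n + 1) = ∑ a, #(chainsFrom Compatible n a) := by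
  rw [snortPath_eq_card_isChain, card_isChain_ofFn_succ]

lemma card_chainsFrom_empty (n : ℕ) : #(chainsFrom Compatible n Empty) = snortPath n := by
  cases n with
  | zero => decide
  | succ n => rw [card_chainsFrom_empty_succ, snortPath_succ]

lemma snortPath_add_two (n : ℕ) : snortPath (n + 2) = 2 * snortPath (n + 1) + snortPath n := by
  have hsymm := card_chainsFrom_blue_eq_red n
  rw [snortPath_succ, snortPath_succ, sum_univ, sum_univ, card_chainsFrom_empty_succ, sum_univ,
    card_chainsFrom_blue_succ, card_chainsFrom_red_succ, card_chainsFrom_empty]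
  omega

lemma pow_add_two_of_sq_eq {R : Type*} [CommSemiring R] {x : R} (hx : x ^ 2 = 2 * x + 1) (n : ℕ) :
    x ^ (n + 2) = 2 * x ^ (n + 1) + x ^ n := by
  rw [pow_add, hx]
  ring

theorem snortPath_closed_form (n : ℕ) :
    (2 : ℝ) * snortPath n =
      (1 + Real.sqrt 2) ^ (n + 1) + (1 - Real.sqrt 2) ^ (n + 1) := by
  have hs : Real.sqrt 2 ^ 2 = 2 := Real.sq_sqrt zero_le_two
  have hp : (1 + Real.sqrt 2) ^ 2 = 2 * (1 + Real.sqrt 2) + 1 := by linear_combination hs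
  have hm : (1 - Real.sqrt 2) ^ 2 = 2 * (1 - Real.sqrt 2) + 1 := by linear_combination hs
  induction n using Nat.twoStepInduction with
  | zero => norm_num [show snortPath 0 = 1 by decide]
  | one => rw [show snortPath 1 = 3 by decide]; linear_combination -hp - hm
  | more n ih₀ ih₁ =>
    rw [snortPath_add_two, pow_add_two_of_sq_eq hp, pow_add_two_of_sq_eq hm]
    push_cast
    linear_combination 2 * ih₁ + ih₀
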